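/- arXiv:2203.06748 — 3 statements merged into one kernel-verified Lean document; each statement's English description precedes it below -/
import Mathlib

section
/- The split likelihood ratio test is valid in finite samples: if $X_{1,0},\dots,X_{m_0 n,0}$ and the data set $D_1$ are independent, $\widehat{\theta}_{n,1}$ is any $D_1$-measurable estimator taking values in $\Theta$, $\widehat{\theta}_{n,0}$ maximizes the $D_0$-likelihood over $\Theta_0$, and $\theta \in \Theta_0$, then for $\Lambda_n = 2(\ell_0(\widehat{\theta}_{n,1}) - \ell_0(\widehat{\theta}_{n,0}))$ one has $P_\theta(\Lambda_n > -2\log\alpha) \le \alpha$ for every $\alpha \in (0,1)$. -/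
/-!
Universal inference. Under the null, the likelihood ratio `T` of `D₀` at the `D₁`-estimate
`θhat1` against the true parameter `θ` has expectation one: conditionally on `D₁` the parameter
`θhat1` is frozen, and a density ratio integrates to one against the density in the
denominator. Since `θhat0` maximizes the likelihood over `Θ₀ ∋ θ`, a rejection forces
`T ≥ 1/α`, and Markov's inequality bounds the probability of that event by `α`.
-/

open MeasureTheory ProbabilityTheory
open scoped ENNReal

theorem lintegral_pi_prod_eq_prod {ι : Type*} [Fintype ι] {𝓧 : ι → Type*}
    [∀ i, MeasurableSpace (𝓧 i)] (μ : (i : ι) → Measure (𝓧 i)) [∀ i, IsProbabilityMeasure (μ i)]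
    {f : (i : ι) → 𝓧 i → ℝ≥0∞} (hf : ∀ i, Measurable (f i)) :
    ∫⁻ xs, ∏ i, f i (xs i) ∂Measure.pi μ = ∏ i, ∫⁻ x, f i x ∂μ i := by
  rw [lintegral_prod_eq_prod_lintegral_of_indepFun _ _
    (iIndepFun_pi fun i => (hf i).aemeasurable) fun i => (hf i).comp (measurable_pi_apply i)]
  exact Finset.prod_congr rfl fun i _ => (measurePreserving_eval μ i).lintegral_comp (hf i)

theorem lintegral_comp_prodMk_of_indepFun {Ω 𝓧 β : Type*} [MeasurableSpace Ω]
    [MeasurableSpace 𝓧] [MeasurableSpace β] {P : Measure Ω} [IsFiniteMeasure P]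
    {X : Ω → 𝓧} {W : Ω → β} (hX : Measurable X) (hW : Measurable W) (hindep : IndepFun X W P)
    {F : 𝓧 × β → ℝ≥0∞} (hF : Measurable F) :
    ∫⁻ ω, F (X ω, W ω) ∂P = ∫⁻ w, ∫⁻ x, F (x, w) ∂P.map X ∂P.map W := by
  rw [← lintegral_map hF (hX.prodMk hW),
    (indepFun_iff_map_prod_eq_prod_map_map hX.aemeasurable hW.aemeasurable).mp hindep,
    lintegral_prod_symm' _ hF]

theorem lintegral_ofReal_div_withDensity {𝓧 : Type*} [MeasurableSpace 𝓧] {μ : Measure 𝓧}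
    {f q : 𝓧 → ℝ} (hf : Measurable f) (hq : Measurable q) (hq_pos : ∀ x, 0 < q x) :
    ∫⁻ x, ENNReal.ofReal (f x / q x) ∂μ.withDensity (fun x => ENNReal.ofReal (q x))
      = ∫⁻ x, ENNReal.ofReal (f x) ∂μ := by
  rw [lintegral_withDensity_eq_lintegral_mul _ hq.ennreal_ofReal
    (show Measurable fun x => ENNReal.ofReal (f x / q x) from (hf.div hq).ennreal_ofReal)]
  refine lintegral_congr fun x => ?_
  rw [Pi.mul_apply, mul_comm, ← ENNReal.ofReal_mul' (hq_pos x).le,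
    div_mul_cancel₀ _ (hq_pos x).ne']

theorem measure_inv_le_le_of_lintegral_le_one {Ω : Type*} [MeasurableSpace Ω] {P : Measure Ω}
    {T : Ω → ℝ≥0∞} (hT : AEMeasurable T P) (hint : ∫⁻ ω, T ω ∂P ≤ 1) {α : ℝ≥0∞}
    (hα₀ : α ≠ 0) (hα_top : α ≠ ∞) :
    P {ω | α⁻¹ ≤ T ω} ≤ α :=
  calc P {ω | α⁻¹ ≤ T ω} ≤ (∫⁻ ω, T ω ∂P) / α⁻¹ :=
        meas_ge_le_lintegral_div hT (ENNReal.inv_ne_zero.mpr hα_top) (ENNReal.inv_ne_top.mpr hα₀)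
    _ ≤ 1 / α⁻¹ := by gcongr
    _ = α := by rw [one_div, inv_inv]

section LikelihoodRatio

variable {𝓧 Θ ι : Type*} [Fintype ι] {p : Θ → 𝓧 → ℝ}

noncomputable def likelihoodRatio (p : Θ → 𝓧 → ℝ) (ϑ θ : Θ) (xs : ι → 𝓧) : ℝ≥0∞ :=
  ∏ i, ENNReal.ofReal (p ϑ (xs i) / p θ (xs i))

theorem likelihoodRatio_eq_ofReal_exp (hpos : ∀ ϑ x, 0 < p ϑ x) (ϑ θ : Θ) (xs : ι → 𝓧) :
    likelihoodRatio p ϑ θ xs = ENNReal.ofReal (Real.exp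
      (∑ i, Real.log (p ϑ (xs i)) - ∑ i, Real.log (p θ (xs i)))) := by
  rw [← Finset.sum_sub_distrib, Real.exp_sum, likelihoodRatio,
    ENNReal.ofReal_prod_of_nonneg fun i _ => (Real.exp_pos _).le]
  refine Finset.prod_congr rfl fun i _ => ?_
  rw [← Real.log_div (hpos _ _).ne' (hpos _ _).ne', Real.exp_log (div_pos (hpos _ _) (hpos _ _))]

theorem inv_ofReal_le_likelihoodRatio (hpos : ∀ ϑ x, 0 < p ϑ x) {α : ℝ} (hα : 0 < α)
    {ϑ₁ ϑ₀ θ : Θ} {xs : ι → 𝓧}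
    (hmax : ∑ i, Real.log (p θ (xs i)) ≤ ∑ i, Real.log (p ϑ₀ (xs i)))
    (hreject : 2 * (∑ i, Real.log (p ϑ₁ (xs i)) - ∑ i, Real.log (p ϑ₀ (xs i)))
      > -2 * Real.log α) :
    (ENNReal.ofReal α)⁻¹ ≤ likelihoodRatio p ϑ₁ θ xs := by
  rw [likelihoodRatio_eq_ofReal_exp hpos, ← ENNReal.ofReal_inv_of_pos hα,
    ← Real.exp_log (inv_pos.mpr hα), Real.log_inv]
  exact ENNReal.ofReal_le_ofReal (Real.exp_le_exp.mpr (by linarith))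

variable [MeasurableSpace 𝓧]

theorem measurable_likelihoodRatio [MeasurableSpace Θ] (hp : Measurable (Function.uncurry p))
    (θ : Θ) : Measurable fun z : Θ × (ι → 𝓧) => likelihoodRatio p z.1 θ z.2 :=
  Finset.measurable_prod _ fun i _ =>
    (hp.comp (measurable_fst.prodMk ((measurable_pi_apply i).comp measurable_snd))).div
      (hp.comp (measurable_const.prodMk ((measurable_pi_apply i).comp measurable_snd)))
      |>.ennreal_ofReal

theorem lintegral_likelihoodRatio {μ : Measure 𝓧} (hpos : ∀ ϑ x, 0 < p ϑ x)
    (hp : ∀ ϑ, Measurable (p ϑ)) (hdens : ∀ ϑ, ∫⁻ x, ENNReal.ofReal (p ϑ x) ∂μ = 1) (ϑ θ : Θ) :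
    ∫⁻ xs, likelihoodRatio p ϑ θ xs
      ∂Measure.pi (fun _ : ι => μ.withDensity fun x => ENNReal.ofReal (p θ x)) = 1 := by
  have : IsProbabilityMeasure (μ.withDensity fun x => ENNReal.ofReal (p θ x)) :=
    ⟨by rw [withDensity_apply _ MeasurableSet.univ, setLIntegral_univ, hdens θ]⟩
  unfold likelihoodRatio
  rw [lintegral_pi_prod_eq_prod _ (f := fun _ x => ENNReal.ofReal (p ϑ x / p θ x))
    fun _ => ((hp ϑ).div (hp θ)).ennreal_ofReal]
  simp only [lintegral_ofReal_div_withDensity (hp ϑ) (hp θ) (hpos θ), hdens,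
    Finset.prod_const_one]

end LikelihoodRatio

/-- Finite-sample validity of the split likelihood ratio test: if the `D₀`-data `X`
are i.i.d. from `P_θ` with `θ ∈ Θ₀`, independent of the `D₁`-data `W`, the estimator
`θhat1` is `D₁`-measurable, and `θhat0` maximizes the `D₀`-log-likelihood over `Θ₀`,
then the SLRT rejecting when `Λ_n > -2 log α` has level `α`. -/
theorem stmt_2 {𝓧 Θ Ω β : Type*} [MeasurableSpace 𝓧] [MeasurableSpace Θ]
    [MeasurableSpace Ω] [MeasurableSpace β]
    (μ : Measure 𝓧) (p : Θ → 𝓧 → ℝ)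
    (hmeas : Measurable (Function.uncurry p))
    (hpos : ∀ ϑ x, 0 < p ϑ x)
    (hdens : ∀ ϑ, ∫⁻ x, ENNReal.ofReal (p ϑ x) ∂μ = 1)
    (Θ0 : Set Θ) (θ : Θ) (hθ : θ ∈ Θ0)
    (P : Measure Ω) [IsProbabilityMeasure P]
    (m : ℕ) (X : Ω → Fin m → 𝓧) (hX : Measurable X)
    (hXlaw : Measure.map X P = Measure.pi fun _ => μ.withDensity fun x => ENNReal.ofReal (p θ x))
    (W : Ω → β) (hW : Measurable W)
    (hindep : IndepFun X W P)
    (g : β → Θ) (hg : Measurable g)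
    (θhat1 : Ω → Θ) (hθ1 : θhat1 = g ∘ W)
    (θhat0 : Ω → Θ)
    (hθ0 : ∀ ω, θhat0 ω ∈ Θ0 ∧ ∀ ϑ ∈ Θ0,
      ∑ i, Real.log (p ϑ (X ω i)) ≤ ∑ i, Real.log (p (θhat0 ω) (X ω i)))
    (α : ℝ) (hα : α ∈ Set.Ioo (0:ℝ) 1) :
    P {ω | 2 * (∑ i, Real.log (p (θhat1 ω) (X ω i))
          - ∑ i, Real.log (p (θhat0 ω) (X ω i))) > -2 * Real.log α}
      ≤ ENNReal.ofReal α := by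
  have hp : ∀ ϑ, Measurable (p ϑ) := fun ϑ => hmeas.comp measurable_prodMk_left
  have hT_meas : Measurable fun z : (Fin m → 𝓧) × β => likelihoodRatio p (g z.2) θ z.1 :=
    (measurable_likelihoodRatio hmeas θ).comp ((hg.comp measurable_snd).prodMk measurable_fst)
  have hT_int : ∫⁻ ω, likelihoodRatio p (g (W ω)) θ (X ω) ∂P = 1 := by
    rw [lintegral_comp_prodMk_of_indepFun hX hW hindep hT_meas, hXlaw]
    simp only [lintegral_likelihoodRatio hpos hp hdens, lintegral_one,
      Measure.map_apply hW MeasurableSet.univ, Set.preimage_univ, measure_univ]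
  calc P {ω | 2 * (∑ i, Real.log (p (θhat1 ω) (X ω i))
          - ∑ i, Real.log (p (θhat0 ω) (X ω i))) > -2 * Real.log α}
      ≤ P {ω | (ENNReal.ofReal α)⁻¹ ≤ likelihoodRatio p (g (W ω)) θ (X ω)} :=
        measure_mono fun ω hreject =>
          inv_ofReal_le_likelihoodRatio hpos hα.1 ((hθ0 ω).2 θ hθ) (by subst hθ1; exact hreject)
    _ ≤ ENNReal.ofReal α :=
        measure_inv_le_le_of_lintegral_le_one (hT_meas.comp (hX.prodMk hW)).aemeasurable
          hT_int.le (ENNReal.ofReal_pos.mpr hα.1).ne' ENNReal.ofReal_ne_top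
end

section
/- Variance of the noncentral split chi-square distribution: if $Z = \|X_{[p]} + \sqrt{m_0} h\|^2 - \|X - \sqrt{m_0/m_1} Y\|^2$ with $X, Y \sim \mathcal{N}_d(0,I_d)$ independent, $m_1 = 1-m_0$, $h \in \mathbb{R}^p$ with $\|h\|^2 = \delta$, then $\mathrm{Var}[Z] = 2(d-p) + 4d\,m_0/(1-m_0) + 2d\,m_0^2/(1-m_0)^2 + 4 m_0 \delta$. -/
open MeasureTheory ProbabilityTheory Real
open scoped NNReal

/-! Write `Z = ∑ᵢ Aᵢ (Xᵢ, Yᵢ)` with `Aᵢ (x, y) = (x + √m₀ hᵢ)² - (x - c y)²` for `i < p`,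
`Aᵢ (x, y) = -(x - c y)²` otherwise, and `c² = m₀ / m₁`. The pairs `(Xᵢ, Yᵢ)` are independent with
law `N(0,1) ⊗ N(0,1)`, so `Var Z = ∑ᵢ Var Aᵢ`. Each `Aᵢ` is a quadratic `α + βx + γx² + εxy + ζy²`,
whose centred part `βx + γ(x² - 1) + εxy + ζ(y² - 1)` is an orthogonal sum of Hermite polynomials
in `L²(N(0,1) ⊗ N(0,1))`; hence its variance is `β² + 2γ² + ε² + 2ζ²`. The moments `E x² = 1`,
`E x⁴ = 3` come from Stein's identity `E x^(n+2) = (n+1) E x^n`. -/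

noncomputable def stdGaussian (d : ℕ) : Measure (Fin d → ℝ) :=
  Measure.pi fun _ => gaussianReal 0 1

lemma integrable_pow_gaussianReal (m : ℝ) (v : ℝ≥0) (n : ℕ) :
    Integrable (fun x : ℝ => x ^ n) (gaussianReal m v) :=
  (memLp_id_gaussianReal n).integrable_norm_pow'.mono' (by fun_prop)
    (ae_of_all _ fun x => by simp [norm_pow])

lemma hasDerivAt_gaussianPDFReal_zero_one (x : ℝ) :
    HasDerivAt (gaussianPDFReal 0 1) (-x * gaussianPDFReal 0 1 x) x := by
  have hφ : gaussianPDFReal 0 1 = fun x => (√(2 * π))⁻¹ * exp (-x ^ 2 / 2) := by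
    ext x; simp [gaussianPDFReal]
  rw [hφ]
  refine (((hasDerivAt_pow 2 x).fun_neg.div_const 2).exp.const_mul (√(2 * π))⁻¹).congr_deriv ?_
  push_cast; ring

lemma integrable_gaussianPDFReal_mul_pow (n : ℕ) :
    Integrable (fun x => gaussianPDFReal 0 1 x * x ^ n) := by
  have := integrable_pow_gaussianReal 0 1 n
  rw [gaussianReal_of_var_ne_zero _ one_ne_zero,
    integrable_withDensity_iff_integrable_smul' (measurable_gaussianPDF _ _)
      (ae_of_all _ fun _ => gaussianPDF_lt_top)] at this
  simpa [toReal_gaussianPDF] using this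

lemma integral_pow_add_two_gaussianReal (n : ℕ) :
    ∫ x, x ^ (n + 2) ∂gaussianReal 0 1 = (n + 1) * ∫ x, x ^ n ∂gaussianReal 0 1 := by
  simp only [integral_gaussianReal_eq_integral_smul one_ne_zero, smul_eq_mul]
  have hderiv (x : ℝ) : HasDerivAt (fun x => gaussianPDFReal 0 1 x * x ^ (n + 1))
      ((n + 1) * (gaussianPDFReal 0 1 x * x ^ n) - gaussianPDFReal 0 1 x * x ^ (n + 2)) x := by
    refine ((hasDerivAt_gaussianPDFReal_zero_one x).fun_mul
      (hasDerivAt_pow (n + 1) x)).congr_deriv ?_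
    push_cast; ring
  have hint := ((integrable_gaussianPDFReal_mul_pow n).const_mul (n + 1)).sub
    (integrable_gaussianPDFReal_mul_pow (n + 2))
  have := integral_eq_zero_of_hasDerivAt_of_integrable hderiv hint
    (integrable_gaussianPDFReal_mul_pow (n + 1))
  rw [integral_sub ((integrable_gaussianPDFReal_mul_pow n).const_mul _)
    (integrable_gaussianPDFReal_mul_pow _), integral_const_mul] at this
  linarith

@[simp] lemma integral_sq_gaussianReal : ∫ x, x ^ 2 ∂gaussianReal 0 1 = 1 := by
  simpa using integral_pow_add_two_gaussianReal 0

@[simp] lemma integral_pow_three_gaussianReal : ∫ x, x ^ 3 ∂gaussianReal 0 1 = 0 := by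
  simpa using integral_pow_add_two_gaussianReal 1

@[simp] lemma integral_pow_four_gaussianReal : ∫ x, x ^ 4 ∂gaussianReal 0 1 = 3 := by
  rw [integral_pow_add_two_gaussianReal 2]; norm_num

lemma Fin.sum_comp_castLE {M : Type*} [AddCommMonoid M] {p d : ℕ} (hp : p ≤ d) (g : Fin d → M) :
    ∑ j : Fin p, g (Fin.castLE hp j) = ∑ i : Fin d, if (i : ℕ) < p then g i else 0 := by
  rw [← Finset.sum_filter]
  refine Finset.sum_nbij (Fin.castLE hp) (by simp) (Fin.castLE_injective hp).injOn
    (fun i hi => ⟨⟨i, by simpa using hi⟩, by simp, rfl⟩) fun _ _ => rfl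

section TwoGaussians

local notation "γ₂" => Measure.prod (gaussianReal 0 1) (gaussianReal 0 1)

lemma integrable_sum_monomials_gaussianReal_prod {K : ℕ} (a : Fin K → ℝ) (k l : Fin K → ℕ) :
    Integrable (fun z : ℝ × ℝ => ∑ j, a j * (z.1 ^ k j * z.2 ^ l j)) γ₂ :=
  integrable_finsetSum _ fun _ _ =>
    ((integrable_pow_gaussianReal 0 1 _).mul_prod (integrable_pow_gaussianReal 0 1 _)).const_mul _

lemma integral_sum_monomials_gaussianReal_prod {K : ℕ} (a : Fin K → ℝ) (k l : Fin K → ℕ) :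
    ∫ z, ∑ j, a j * (z.1 ^ k j * z.2 ^ l j) ∂γ₂
      = ∑ j, a j * ((∫ x, x ^ k j ∂gaussianReal 0 1) * ∫ y, y ^ l j ∂gaussianReal 0 1) := by
  rw [integral_finsetSum _ fun j _ =>
    ((integrable_pow_gaussianReal 0 1 _).mul_prod (integrable_pow_gaussianReal 0 1 _)).const_mul _]
  simp only [integral_const_mul]
  exact Finset.sum_congr rfl fun j _ => by
    rw [integral_prod_mul (fun x => x ^ k j) fun y => y ^ l j]

/- A polynomial in `z = (x, y)` is encoded by a coefficient table and two exponent tables, so that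
its integrability and integral are handled once, monomial by monomial. -/
lemma quadratic_sq_eq_sum_monomials (β γ ε ζ : ℝ) (z : ℝ × ℝ) :
    (β * z.1 + γ * z.1 ^ 2 + ε * (z.1 * z.2) + ζ * z.2 ^ 2) ^ 2
      = ∑ j, ![β ^ 2, 2 * β * γ, 2 * β * ε, 2 * β * ζ, γ ^ 2, 2 * γ * ε, 2 * γ * ζ + ε ^ 2,
          2 * ε * ζ, ζ ^ 2] j
        * (z.1 ^ ![2, 3, 2, 1, 4, 3, 2, 1, 0] j * z.2 ^ ![0, 0, 1, 2, 0, 1, 2, 3, 4] j) := by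
  simp only [Fin.sum_univ_succ, Fin.sum_univ_zero, Matrix.cons_val_zero, Matrix.cons_val_succ]
  ring

lemma quadratic_eq_sum_monomials (β γ ε ζ : ℝ) (z : ℝ × ℝ) :
    β * z.1 + γ * z.1 ^ 2 + ε * (z.1 * z.2) + ζ * z.2 ^ 2
      = ∑ j, ![β, γ, ε, ζ] j * (z.1 ^ ![1, 2, 1, 0] j * z.2 ^ ![0, 0, 1, 2] j) := by
  simp only [Fin.sum_univ_succ, Fin.sum_univ_zero, Matrix.cons_val_zero, Matrix.cons_val_succ]
  ring

lemma memLp_two_quadratic_gaussianReal_prod (α β γ ε ζ : ℝ) :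
    MemLp (fun z : ℝ × ℝ => α + β * z.1 + γ * z.1 ^ 2 + ε * (z.1 * z.2) + ζ * z.2 ^ 2) 2 γ₂ := by
  have hq : MemLp (fun z : ℝ × ℝ => β * z.1 + γ * z.1 ^ 2 + ε * (z.1 * z.2) + ζ * z.2 ^ 2)
      2 γ₂ := by
    refine (memLp_two_iff_integrable_sq (by fun_prop)).2 ?_
    simp only [quadratic_sq_eq_sum_monomials]
    exact integrable_sum_monomials_gaussianReal_prod _ _ _
  convert (memLp_const α).add hq using 1
  ext z; simp only [Pi.add_apply]; ring

lemma variance_quadratic_gaussianReal_prod (α β γ ε ζ : ℝ) :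
    Var[fun z : ℝ × ℝ => α + β * z.1 + γ * z.1 ^ 2 + ε * (z.1 * z.2) + ζ * z.2 ^ 2; γ₂]
      = β ^ 2 + 2 * γ ^ 2 + ε ^ 2 + 2 * ζ ^ 2 := by
  set q : ℝ × ℝ → ℝ := fun z => β * z.1 + γ * z.1 ^ 2 + ε * (z.1 * z.2) + ζ * z.2 ^ 2
  have hq : MemLp q 2 γ₂ := by simpa using memLp_two_quadratic_gaussianReal_prod 0 β γ ε ζ
  have hmean : ∫ z, q z ∂γ₂ = γ + ζ := by
    simp only [q, quadratic_eq_sum_monomials, integral_sum_monomials_gaussianReal_prod]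
    simp only [Fin.sum_univ_succ, Fin.sum_univ_zero, Matrix.cons_val_zero, Matrix.cons_val_succ,
      pow_zero, pow_one, integral_const, probReal_univ, integral_id_gaussianReal,
      integral_sq_gaussianReal]
    ring
  have hsq : ∫ z, q z ^ 2 ∂γ₂ = β ^ 2 + 3 * γ ^ 2 + ε ^ 2 + 3 * ζ ^ 2 + 2 * γ * ζ := by
    simp only [q, quadratic_sq_eq_sum_monomials, integral_sum_monomials_gaussianReal_prod]
    simp only [Fin.sum_univ_succ, Fin.sum_univ_zero, Matrix.cons_val_zero, Matrix.cons_val_succ,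
      pow_zero, pow_one, integral_const, probReal_univ, integral_id_gaussianReal,
      integral_sq_gaussianReal, integral_pow_three_gaussianReal, integral_pow_four_gaussianReal]
    ring
  calc _ = Var[fun z => α + q z; γ₂] := by congr 1; ext z; simp only [q]; ring
    _ = Var[q; γ₂] := variance_const_add hq.aestronglyMeasurable α
    _ = _ := by rw [variance_eq_sub hq]; simp only [Pi.pow_apply, hsq, hmean]; ring

lemma memLp_two_ite_sq_sub_sq_gaussianReal_prod (b : Prop) [Decidable b] (a c : ℝ) :
    MemLp (fun z : ℝ × ℝ => (if b then (z.1 + a) ^ 2 else 0) - (z.1 - c * z.2) ^ 2) 2 γ₂ := by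
  by_cases hb : b
  · convert memLp_two_quadratic_gaussianReal_prod (a ^ 2) (2 * a) 0 (2 * c) (-c ^ 2) using 2
    simp only [if_pos hb]; ring
  · convert memLp_two_quadratic_gaussianReal_prod 0 0 (-1) (2 * c) (-c ^ 2) using 2
    simp only [if_neg hb]; ring

lemma variance_ite_sq_sub_sq_gaussianReal_prod (b : Prop) [Decidable b] (a c : ℝ) :
    Var[fun z : ℝ × ℝ => (if b then (z.1 + a) ^ 2 else 0) - (z.1 - c * z.2) ^ 2; γ₂]
      = (if b then 4 * a ^ 2 - 2 else 0) + (2 + 4 * c ^ 2 + 2 * c ^ 4) := by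
  by_cases hb : b
  · convert variance_quadratic_gaussianReal_prod (a ^ 2) (2 * a) 0 (2 * c) (-c ^ 2) using 1
    · congr 1; ext z; simp only [if_pos hb]; ring
    · simp only [if_pos hb]; ring
  · convert variance_quadratic_gaussianReal_prod 0 0 (-1) (2 * c) (-c ^ 2) using 1
    · congr 1; ext z; simp only [if_neg hb]; ring
    · simp only [if_neg hb]; ring

end TwoGaussians

lemma ProbabilityTheory.IndepFun.map_pi_pair_eq_pi_prod {Ω ι α β : Type*} [MeasurableSpace Ω]
    [MeasurableSpace α] [MeasurableSpace β] [Fintype ι] {P : Measure Ω} [IsFiniteMeasure P]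
    {μ : ι → Measure α} {ν : ι → Measure β}
    [∀ i, IsProbabilityMeasure (μ i)] [∀ i, IsProbabilityMeasure (ν i)]
    {X : Ω → ι → α} {Y : Ω → ι → β}
    (hXY : IndepFun X Y P) (hX : P.map X = Measure.pi μ) (hY : P.map Y = Measure.pi ν) :
    P.map (fun ω i => (X ω i, Y ω i)) = Measure.pi fun i => (μ i).prod (ν i) := by
  have hXm : AEMeasurable X P := .of_map_ne_zero (hX ▸ IsProbabilityMeasure.ne_zero _)
  have hYm : AEMeasurable Y P := .of_map_ne_zero (hY ▸ IsProbabilityMeasure.ne_zero _)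
  have hXY' : P.map (fun ω => (X ω, Y ω)) = (Measure.pi μ).prod (Measure.pi ν) := by
    rw [(indepFun_iff_map_prod_eq_prod_map_map hXm hYm).1 hXY, hX, hY]
  rw [← (measurePreserving_arrowProdEquivProdArrow α β ι μ ν).symm.map_eq, ← hXY',
    AEMeasurable.map_map_of_aemeasurable (by fun_prop) (hXm.prodMk hYm)]
  rfl

lemma variance_sum_comp_of_map_eq_pi {Ω ι α : Type*} [MeasurableSpace Ω] [MeasurableSpace α]
    [Fintype ι] {P : Measure Ω} {μ : ι → Measure α} [∀ i, IsProbabilityMeasure (μ i)]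
    {T : Ω → ι → α} (hT : P.map T = Measure.pi μ) {f : ι → α → ℝ}
    (hf : ∀ i, MemLp (f i) 2 (μ i)) :
    Var[fun ω => ∑ i, f i (T ω i); P] = ∑ i, Var[f i; μ i] := by
  have hTm : AEMeasurable T P := .of_map_ne_zero (by rw [hT]; exact IsProbabilityMeasure.ne_zero _)
  have hF : AEMeasurable (∑ i, fun w : ι → α => f i (w i)) (P.map T) := by
    rw [hT]
    exact Finset.aemeasurable_sum _ fun i _ => ((hf i).comp_measurePreserving
      (measurePreserving_eval _ i)).aestronglyMeasurable.aemeasurable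
  calc Var[fun ω => ∑ i, f i (T ω i); P] = Var[(∑ i, fun w : ι → α => f i (w i)) ∘ T; P] := by
        congr 1; ext ω; simp
    _ = Var[∑ i, fun w : ι → α => f i (w i); P.map T] := (variance_map hF hTm).symm
    _ = ∑ i, Var[f i; μ i] := by rw [hT, variance_sum_pi hf]

/-- Variance of the noncentral split chi-square distribution:
`Var[Z] = 2(d-p) + 4d m₀/(1-m₀) + 2d m₀²/(1-m₀)² + 4 m₀ δ`. -/
theorem stmt_5 {Ω : Type*} [MeasurableSpace Ω] (P : Measure Ω) [IsProbabilityMeasure P]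
    (d p : ℕ) (hp : p ≤ d) (X Y : Ω → Fin d → ℝ)
    (hX : Measure.map X P = stdGaussian d) (hY : Measure.map Y P = stdGaussian d)
    (hXY : IndepFun X Y P)
    (m0 : ℝ) (hm0 : m0 ∈ Set.Ioo (0:ℝ) 1) (m1 : ℝ) (hm1 : m1 = 1 - m0)
    (h : Fin p → ℝ) (δ : ℝ) (hδ : ∑ i, h i ^ 2 = δ) :
    variance (fun ω => ∑ i : Fin p, (X ω (Fin.castLE hp i) + Real.sqrt m0 * h i) ^ 2
        - ∑ i : Fin d, (X ω i - Real.sqrt (m0 / m1) * Y ω i) ^ 2) P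
      = 2 * ((d : ℝ) - p) + 4 * d * m0 / (1 - m0) + 2 * d * m0 ^ 2 / (1 - m0) ^ 2
        + 4 * m0 * δ := by
  obtain ⟨hm0, hm0'⟩ := hm0
  set c := √(m0 / m1)
  set a : Fin d → ℝ := fun i => √m0 * if hi : (i : ℕ) < p then h ⟨i, hi⟩ else 0
  set A : Fin d → ℝ × ℝ → ℝ :=
    fun i z => (if (i : ℕ) < p then (z.1 + a i) ^ 2 else 0) - (z.1 - c * z.2) ^ 2
  set T : Ω → Fin d → ℝ × ℝ := fun ω i => (X ω i, Y ω i)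
  have ha (j : Fin p) : a (Fin.castLE hp j) = √m0 * h j := by simp [a]
  have hZ : (fun ω => ∑ i : Fin p, (X ω (Fin.castLE hp i) + √m0 * h i) ^ 2
        - ∑ i : Fin d, (X ω i - c * Y ω i) ^ 2)
      = fun ω => ∑ i, A i (T ω i) := by
    ext ω
    simp only [← ha, Fin.sum_comp_castLE hp fun i => (X ω i + a i) ^ 2, A, T,
      Finset.sum_sub_distrib]
  have hsum : ∑ j : Fin p, (4 * a (Fin.castLE hp j) ^ 2 - 2) = 4 * m0 * δ - 2 * p := by
    simp only [ha, mul_pow, Real.sq_sqrt hm0.le, Finset.sum_sub_distrib, ← Finset.mul_sum, hδ,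
      Finset.sum_const, Finset.card_univ, Fintype.card_fin, nsmul_eq_mul]
    ring
  have hc : c ^ 2 = m0 / (1 - m0) := by
    rw [Real.sq_sqrt (by rw [hm1]; exact div_nonneg hm0.le (by linarith)), hm1]
  rw [hZ, variance_sum_comp_of_map_eq_pi (hXY.map_pi_pair_eq_pi_prod hX hY)
    fun i => memLp_two_ite_sq_sub_sq_gaussianReal_prod _ _ _]
  simp only [variance_ite_sq_sub_sq_gaussianReal_prod, Finset.sum_add_distrib,
    ← Fin.sum_comp_castLE hp fun i => 4 * a i ^ 2 - 2, hsum, Finset.sum_const, Finset.card_univ,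
    Fintype.card_fin, nsmul_eq_mul]
  rw [show c ^ 4 = (c ^ 2) ^ 2 by ring, hc]
  field_simp
  ring
end

section
/- Quadratic form representation of the split chi-square distribution: let $h \in \mathbb{R}^p$, $k = d - p$, $\mu = (h, 0, h, 0) \in \mathbb{R}^{2d}$ (with zeros in $\mathbb{R}^k$), let $\epsilon \sim \mathcal{N}_{2d}(0, \Sigma)$ with $\Sigma = \mathrm{diag}(m_0^{-1} I_d, m_1^{-1} I_d)$, $m_1 = 1 - m_0$, and let $A$ be the symmetric block matrix with blocks $A_{13} = A_{31} = I_p$, $A_{24} = A_{42} = I_k$, $A_{22} = -I_k$, $A_{33} = -I_p$, $A_{44} = -I_k$, and all other blocks zero. Then $m_0 (\epsilon + \mu)^T A (\epsilon + \mu)$ has the same distribution as $\|X_{[p]} + \sqrt{m_0} h\|^2 - \|X - \sqrt{m_0/m_1} Y\|^2$ for independent $X, Y \sim \mathcal{N}_d(0, I_d)$. -/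
/-!
Realise `ε` as `(X / √m₀, Y / √m₁)`, reindexing `Fin (p + k)` as `Fin p ⊕ Fin k`: this map sends
the law of `(X, Y)`, which is `N(0, I) ⊗ N(0, I)` by independence, to the law of `ε`. So it
suffices to compare the two functions pointwise along it. For `w = (a, b, c, e)` the quadratic
form of `A` is `2 a⬝c - b⬝b + 2 b⬝e - c⬝c - e⬝e = |a|² - |a - c|² - |b - e|²`; the shift `μ`
cancels in the differences, and `m₀ = (√m₀)²` turns `m₀ |a + h|²` into `|X_[p] + √m₀ h|²` and
`m₀ |(a, b) - (c, e)|²` into `|X - √(m₀ / m₁) Y|²`.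
-/

open MeasureTheory ProbabilityTheory

instance (d : ℕ) : IsProbabilityMeasure (_root_.stdGaussian d) := by
  unfold _root_.stdGaussian; infer_instance

namespace SplitChiSquare

open Matrix

variable {R : Type*} [CommRing R] {ιp ιk : Type*} [Fintype ιp] [Fintype ιk]
  [DecidableEq ιp] [DecidableEq ιk]

variable (R ιp ιk) in
def quadMatrix : Matrix ((ιp ⊕ ιk) ⊕ (ιp ⊕ ιk)) ((ιp ⊕ ιk) ⊕ (ιp ⊕ ιk)) R :=
  fromBlocks (fromBlocks 0 0 0 (-1)) (fromBlocks 1 0 0 1)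
    (fromBlocks 1 0 0 1) (fromBlocks (-1) 0 0 (-1))

theorem dotProduct_quadMatrix_mulVec (w : (ιp ⊕ ιk) ⊕ (ιp ⊕ ιk) → R) :
    w ⬝ᵥ (quadMatrix R ιp ιk *ᵥ w)
      = ∑ i, w (.inl (.inl i)) ^ 2 - ∑ i, (w (.inl i) - w (.inr i)) ^ 2 := by
  obtain ⟨a, b, c, e, rfl⟩ : ∃ a b c e, w = Sum.elim (Sum.elim a b) (Sum.elim c e) :=
    ⟨_, _, _, _, by funext i; rcases i with (i | i) | (i | i) <;> rfl⟩
  calc _ = a ⬝ᵥ a - ((a - c) ⬝ᵥ (a - c) + (b - e) ⬝ᵥ (b - e)) := by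
        simp only [quadMatrix, fromBlocks_mulVec, sumElim_dotProduct_sumElim, one_mulVec,
          zero_mulVec, neg_mulVec, add_zero, zero_add, Sum.elim_comp_inl, Sum.elim_comp_inr,
          dotProduct_add, dotProduct_neg, dotProduct_zero, sub_dotProduct, dotProduct_sub]
        rw [dotProduct_comm c a, dotProduct_comm e b]
        ring
    _ = _ := by
        simp only [dotProduct, Pi.sub_apply, sq, Fintype.sum_sum_type, Sum.elim_inl, Sum.elim_inr]

theorem dotProduct_quadMatrix_mulVec_add_shift (v : (ιp ⊕ ιk) ⊕ (ιp ⊕ ιk) → R) (h : ιp → R) :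
    (fun i => v i + Sum.elim (Sum.elim h 0) (Sum.elim h 0) i) ⬝ᵥ
        (quadMatrix R ιp ιk *ᵥ fun i => v i + Sum.elim (Sum.elim h 0) (Sum.elim h 0) i)
      = ∑ i, (v (.inl (.inl i)) + h i) ^ 2 - ∑ i, (v (.inl i) - v (.inr i)) ^ 2 := by
  rw [dotProduct_quadMatrix_mulVec]
  congr 1
  refine Fintype.sum_congr _ _ fun i => ?_
  rcases i with i | i <;> simp

theorem measurePreserving_inv_sqrt_mul_gaussianReal (m : ℝ) :
    MeasurePreserving ((√m)⁻¹ * ·) (gaussianReal 0 1) (gaussianReal 0 m⁻¹.toNNReal) := by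
  refine ⟨measurable_const_mul _, ?_⟩
  rw [gaussianReal_map_const_mul, mul_zero, mul_one]
  congr 1
  ext
  rcases le_or_gt 0 m with hm | hm
  · simp [inv_pow, Real.sq_sqrt hm, hm]
  · simp [Real.sqrt_eq_zero_of_nonpos hm.le, hm.le]

variable {ι ι' : Type*} [Fintype ι] [Fintype ι']

noncomputable def coupling (e : ι ≃ ι') (m₀ m₁ : ℝ) (z : (ι' → ℝ) × (ι' → ℝ)) : ι ⊕ ι → ℝ :=
  Sum.elim (fun i => (√m₀)⁻¹ * z.1 (e i)) (fun i => (√m₁)⁻¹ * z.2 (e i))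

theorem measurePreserving_coupling (e : ι ≃ ι') (m₀ m₁ : ℝ) :
    MeasurePreserving (coupling e m₀ m₁)
      ((Measure.pi fun _ => gaussianReal 0 1).prod (Measure.pi fun _ => gaussianReal 0 1))
      (Measure.pi fun i => Sum.elim (fun _ => gaussianReal 0 m₀⁻¹.toNNReal)
        (fun _ => gaussianReal 0 m₁⁻¹.toNNReal) i) := by
  have hreindex : MeasurePreserving (fun (x : ι' → ℝ) i => x (e i))
      (Measure.pi fun _ => gaussianReal 0 1) (Measure.pi fun _ => gaussianReal 0 1) :=
    (measurePreserving_piCongrLeft (fun _ => gaussianReal 0 1) e).symm _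
  have hscale (m : ℝ) := measurePreserving_pi (ι := ι) _ _
    fun _ => measurePreserving_inv_sqrt_mul_gaussianReal m
  have (i : ι ⊕ ι) : IsProbabilityMeasure (Sum.elim (fun _ => gaussianReal 0 m₀⁻¹.toNNReal)
      (fun _ => gaussianReal 0 m₁⁻¹.toNNReal) i) := by
    rcases i with i | i <;> dsimp only [Sum.elim_inl, Sum.elim_inr] <;> infer_instance
  have hsum := measurePreserving_sumPiEquivProdPi_symm (X := fun _ : ι ⊕ ι => ℝ)
    (Sum.elim (fun _ => gaussianReal 0 m₀⁻¹.toNNReal) (fun _ => gaussianReal 0 m₁⁻¹.toNNReal))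
  exact hsum.comp (((hscale m₀).comp hreindex).prod ((hscale m₁).comp hreindex))

theorem mul_dotProduct_quadMatrix_coupling {p k : ℕ} {m₀ : ℝ} (hm₀ : 0 < m₀) (m₁ : ℝ) (h : Fin p → ℝ)
    (x y : Fin (p + k) → ℝ) :
    m₀ * ((fun i => coupling finSumFinEquiv m₀ m₁ (x, y) i
          + Sum.elim (Sum.elim h 0) (Sum.elim h 0) i) ⬝ᵥ
        (quadMatrix ℝ (Fin p) (Fin k) *ᵥ fun i => coupling finSumFinEquiv m₀ m₁ (x, y) i
          + Sum.elim (Sum.elim h 0) (Sum.elim h 0) i))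
      = ∑ i : Fin p, (x (Fin.castAdd k i) + √m₀ * h i) ^ 2
          - ∑ i : Fin (p + k), (x i - √(m₀ / m₁) * y i) ^ 2 := by
  have hs : √m₀ ≠ 0 := by positivity
  have hsq (t : ℝ) : m₀ * t ^ 2 = (√m₀ * t) ^ 2 := by rw [mul_pow, Real.sq_sqrt hm₀.le]
  rw [dotProduct_quadMatrix_mulVec_add_shift, mul_sub, Finset.mul_sum, Finset.mul_sum,
    Real.sqrt_div hm₀.le, ← finSumFinEquiv.sum_comp]
  congr 1 <;> refine Fintype.sum_congr _ _ fun i => ?_ <;>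
    simp only [hsq, coupling, Sum.elim_inl, Sum.elim_inr, finSumFinEquiv_apply_left] <;>
    field_simp

end SplitChiSquare

theorem MeasureTheory.MeasurePreserving.map_comp_eq_map_comp_comp
    {Ω Ω' α β γ : Type*} [MeasurableSpace Ω] [MeasurableSpace Ω'] [MeasurableSpace α]
    [MeasurableSpace β] [MeasurableSpace γ] {P : Measure Ω} {P' : Measure Ω'}
    {ν : Measure α} [NeZero ν] {μ : Measure β} {T : α → β} {ε : Ω → β} {Z : Ω' → α}
    (hT : MeasurePreserving T ν μ) (hε : P.map ε = μ) (hZ : P'.map Z = ν)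
    {Q : β → γ} (hQ : Measurable Q) :
    P.map (Q ∘ ε) = P'.map (Q ∘ T ∘ Z) := by
  have hεm : AEMeasurable ε P := .of_map_ne_zero <| by
    rw [hε, ← hT.map_eq, Measure.map_ne_zero_iff hT.measurable.aemeasurable]
    exact NeZero.ne ν
  have hZm : AEMeasurable Z P' := .of_map_ne_zero (hZ ▸ NeZero.ne ν)
  rw [← AEMeasurable.map_map_of_aemeasurable hQ.aemeasurable hεm, hε, ← hT.map_eq, ← hZ,
    Measure.map_map hQ hT.measurable,
    AEMeasurable.map_map_of_aemeasurable (hQ.comp hT.measurable).aemeasurable hZm]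
  rfl

theorem stmt_7_general {Ω : Type*} [MeasurableSpace Ω] (P : Measure Ω)
    (p k : ℕ) (m0 : ℝ) (hm0 : m0 ∈ Set.Ioo (0:ℝ) 1) (m1 : ℝ)
    (h : Fin p → ℝ)
    (X Y : Ω → Fin (p + k) → ℝ)
    (hX : Measure.map X P = stdGaussian (p + k))
    (hY : Measure.map Y P = stdGaussian (p + k))
    (hXY : IndepFun X Y P)
    (ε : Ω → ((Fin p ⊕ Fin k) ⊕ (Fin p ⊕ Fin k)) → ℝ)
    (hε : Measure.map ε P = Measure.pi fun i =>
      Sum.elim (fun _ => gaussianReal 0 (Real.toNNReal m0⁻¹))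
        (fun _ => gaussianReal 0 (Real.toNNReal m1⁻¹)) i)
    (μv : ((Fin p ⊕ Fin k) ⊕ (Fin p ⊕ Fin k)) → ℝ)
    (hμ : μv = Sum.elim (Sum.elim h 0) (Sum.elim h 0))
    (A : Matrix ((Fin p ⊕ Fin k) ⊕ (Fin p ⊕ Fin k)) ((Fin p ⊕ Fin k) ⊕ (Fin p ⊕ Fin k)) ℝ)
    (hA : A = Matrix.fromBlocks
      (Matrix.fromBlocks 0 0 0 (-1)) (Matrix.fromBlocks 1 0 0 1)
      (Matrix.fromBlocks 1 0 0 1) (Matrix.fromBlocks (-1) 0 0 (-1))) :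
    Measure.map (fun ω =>
        m0 * dotProduct (fun i => ε ω i + μv i) (A.mulVec fun i => ε ω i + μv i)) P
      = Measure.map (fun ω =>
          ∑ i : Fin p, (X ω (Fin.castAdd k i) + Real.sqrt m0 * h i) ^ 2
            - ∑ i : Fin (p + k), (X ω i - Real.sqrt (m0 / m1) * Y ω i) ^ 2) P := by
  have hXm : AEMeasurable X P := .of_map_ne_zero (hX ▸ NeZero.ne _)
  have hYm : AEMeasurable Y P := .of_map_ne_zero (hY ▸ NeZero.ne _)
  have hXY_law : P.map (fun ω => (X ω, Y ω))
      = (_root_.stdGaussian (p + k)).prod (_root_.stdGaussian (p + k)) := by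
    have hσX : SigmaFinite (P.map X) := by rw [hX]; infer_instance
    have hσY : SigmaFinite (P.map Y) := by rw [hY]; infer_instance
    rw [(indepFun_iff_map_prod_eq_prod_map_map' hXm hYm hσX hσY).1 hXY, hX, hY]
  have hQ : Measurable fun v : (Fin p ⊕ Fin k) ⊕ (Fin p ⊕ Fin k) → ℝ =>
      m0 * dotProduct (fun i => v i + μv i) (A.mulVec fun i => v i + μv i) := by
    fun_prop
  subst hμ hA
  exact ((SplitChiSquare.measurePreserving_coupling finSumFinEquiv m0 m1).map_comp_eq_map_comp_comp
    hε hXY_law hQ).trans <| congrArg (Measure.map · P) <| funext fun ω =>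
      SplitChiSquare.mul_dotProduct_quadMatrix_coupling hm0.1 m1 h (X ω) (Y ω)

/-- Quadratic form representation of the split chi-square distribution:
with `ε ~ N_{2d}(0, diag(m₀⁻¹ I_d, m₁⁻¹ I_d))`, `μ = (h,0,h,0)` and the block matrix `A`
as in the paper, `m₀ (ε+μ)ᵀ A (ε+μ)` is distributed as
`‖X_[p] + √m₀ h‖² - ‖X - √(m₀/m₁) Y‖²` for independent standard Gaussians `X, Y`. -/
theorem stmt_7 {Ω : Type*} [MeasurableSpace Ω] (P : Measure Ω) [IsProbabilityMeasure P]
    (p k : ℕ) (m0 : ℝ) (hm0 : m0 ∈ Set.Ioo (0:ℝ) 1) (m1 : ℝ) (hm1 : m1 = 1 - m0)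
    (h : Fin p → ℝ)
    (X Y : Ω → Fin (p + k) → ℝ)
    (hX : Measure.map X P = stdGaussian (p + k))
    (hY : Measure.map Y P = stdGaussian (p + k))
    (hXY : IndepFun X Y P)
    (ε : Ω → ((Fin p ⊕ Fin k) ⊕ (Fin p ⊕ Fin k)) → ℝ)
    (hε : Measure.map ε P = Measure.pi fun i =>
      Sum.elim (fun _ => gaussianReal 0 (Real.toNNReal m0⁻¹))
        (fun _ => gaussianReal 0 (Real.toNNReal m1⁻¹)) i)
    (μv : ((Fin p ⊕ Fin k) ⊕ (Fin p ⊕ Fin k)) → ℝ)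
    (hμ : μv = Sum.elim (Sum.elim h 0) (Sum.elim h 0))
    (A : Matrix ((Fin p ⊕ Fin k) ⊕ (Fin p ⊕ Fin k)) ((Fin p ⊕ Fin k) ⊕ (Fin p ⊕ Fin k)) ℝ)
    (hA : A = Matrix.fromBlocks
      (Matrix.fromBlocks 0 0 0 (-1)) (Matrix.fromBlocks 1 0 0 1)
      (Matrix.fromBlocks 1 0 0 1) (Matrix.fromBlocks (-1) 0 0 (-1))) :
    Measure.map (fun ω =>
        m0 * dotProduct (fun i => ε ω i + μv i) (A.mulVec fun i => ε ω i + μv i)) P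
      = Measure.map (fun ω =>
          ∑ i : Fin p, (X ω (Fin.castAdd k i) + Real.sqrt m0 * h i) ^ 2
            - ∑ i : Fin (p + k), (X ω i - Real.sqrt (m0 / m1) * Y ω i) ^ 2) P :=
  stmt_7_general P p k m0 hm0 m1 h X Y hX hY hXY ε hε μv hμ A hA
end
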